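/- The ladder chain L(2,2,√2−1) is recurrent: if p = √2−1, then P(S_n = 0 for some n ≥ 1) = 1. -/

import Mathlib

/-!
Let `F_n = E[X_{n+1} | ξ_1, …, ξ_n]`, which is `3p - 1` after `ξ_n = 1` and `2p - 1` otherwise.
Then `E[F_{n+1} | ξ_1, …, ξ_n] = p² + 2p - 1`, which vanishes exactly at `p = √2 - 1`, so
`M_n = S_n + F_n` is a martingale. Its increments lie between `1` and `2` in absolute value, so it
cannot converge; a martingale with bounded increments that does not converge is a.s. unbounded
above and below. Hence so is `S`, and since `S` only ever steps down by `1`, it returns to `0`.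
-/

open MeasureTheory ProbabilityTheory Filter
open scoped ENNReal Classical

noncomputable section

variable {Ω : Type*} [MeasurableSpace Ω]

/-- The `k`-th step of the ladder chain `L(2,2,p)` built from the driving
sequence `ξ` (indexed from 1): `X₁ = ±1` according to `ξ₁`, and for `k ≥ 2`,
`X_k = -1` if `ξ_k = -1`, `X_k = 2` if `ξ_k = ξ_{k-1} = 1`, and `X_k = 1`
if `ξ_k = 1, ξ_{k-1} = -1`. -/
def ladderX (ξ : ℕ → Ω → ℤ) (k : ℕ) (ω : Ω) : ℤ :=
  if k = 1 then (if ξ 1 ω = 1 then 1 else -1)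
  else if ξ k ω = -1 then -1
  else if ξ (k - 1) ω = 1 then 2 else 1

/-- The ladder chain `S_n = X₁ + ⋯ + X_n` (with `S_0 = 0`). -/
def ladderS (ξ : ℕ → Ω → ℤ) (n : ℕ) (ω : Ω) : ℤ :=
  ∑ k ∈ Finset.Icc 1 n, ladderX ξ k ω

open Set Topology

section MartingaleIncrements

variable {f : ℕ → Ω → ℝ} {ℱ : Filtration ℕ ‹MeasurableSpace Ω›} {μ : Measure Ω}

theorem MeasureTheory.Martingale.ae_not_bddAbove_and_not_bddBelow [IsFiniteMeasure μ]
    (hf : Martingale f ℱ μ) {R : NNReal} {δ : ℝ} (hδ : 0 < δ)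
    (hbdd : ∀ᵐ ω ∂μ, ∀ i, |f (i + 1) ω - f i ω| ≤ R)
    (hsep : ∀ᵐ ω ∂μ, ∀ i, δ ≤ |f (i + 1) ω - f i ω|) :
    ∀ᵐ ω ∂μ, ¬BddAbove (range fun n => f n ω) ∧ ¬BddBelow (range fun n => f n ω) := by
  filter_upwards [hf.submartingale.bddAbove_iff_exists_tendsto hbdd,
    hf.bddAbove_range_iff_bddBelow_range hbdd, hsep] with ω hconv hsymm hω
  have hdiv : ¬∃ c, Tendsto (fun n => f n ω) atTop (𝓝 c) := by
    rintro ⟨c, hc⟩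
    have h0 : Tendsto (fun n => |f (n + 1) ω - f n ω|) atTop (𝓝 0) := by
      simpa using ((hc.comp (tendsto_add_atTop_nat 1)).sub hc).abs
    obtain ⟨n, hn⟩ := (h0.eventually (gt_mem_nhds hδ)).exists
    exact hn.not_ge (hω n)
  exact ⟨fun h => hdiv (hconv.1 h), fun h => hdiv (hconv.1 (hsymm.2 h))⟩

theorem martingale_of_succ_eq_add_mul [IsFiniteMeasure μ] {B D : ℕ → Ω → ℝ} {R : ℝ}
    (hf0 : StronglyMeasurable[ℱ 0] (f 0)) (hf0int : Integrable (f 0) μ)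
    (hB : StronglyAdapted ℱ B) (hBbdd : ∀ n ω, |B n ω| ≤ R)
    (hD : StronglyAdapted ℱ D) (hDint : ∀ n, Integrable (D n) μ)
    (hDcond : ∀ n, μ[D (n + 1) | ℱ n] =ᵐ[μ] 0)
    (hf : ∀ n, f (n + 1) = f n + B n * D (n + 1)) :
    Martingale f ℱ μ := by
  have hBD : ∀ n, Integrable (B n * D (n + 1)) μ := fun n =>
    (hDint (n + 1)).bdd_mul ((hB n).mono (ℱ.le n)).aestronglyMeasurable
      (ae_of_all _ fun ω => (Real.norm_eq_abs _).trans_le (hBbdd n ω))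
  have hfn : ∀ n, StronglyMeasurable[ℱ n] (f n) ∧ Integrable (f n) μ := by
    intro n
    induction n with
    | zero => exact ⟨hf0, hf0int⟩
    | succ n ih =>
      rw [hf n]
      exact ⟨(ih.1.mono (ℱ.mono n.le_succ)).add (((hB n).mono (ℱ.mono n.le_succ)).mul (hD _)),
        ih.2.add (hBD n)⟩
  refine martingale_of_condExp_sub_eq_zero_nat (fun n => (hfn n).1) (fun n => (hfn n).2)
    fun n => ?_
  calc μ[f (n + 1) - f n | ℱ n] = μ[B n * D (n + 1) | ℱ n] := by
        rw [hf n, add_sub_cancel_left]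
    _ =ᵐ[μ] B n * μ[D (n + 1) | ℱ n] :=
      condExp_mul_of_stronglyMeasurable_left (hB n) (hBD n) (hDint _)
    _ =ᵐ[μ] 0 := by
      filter_upwards [hDcond n] with ω hω
      simp [hω]

end MartingaleIncrements

theorem ProbabilityTheory.iIndepFun.condExp_natural_ae_eq_of_lt_of_stronglyMeasurable
    {ι β : Type*} [LinearOrder ι] [MeasurableSpace β] [NormedAddCommGroup β] [BorelSpace β]
    {ξ : ι → Ω → β} {μ : Measure Ω} (hξ : ∀ i, StronglyMeasurable (ξ i))
    (hindep : iIndepFun ξ μ) {i j : ι} (hij : i < j) {g : Ω → ℝ}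
    (hg : StronglyMeasurable[MeasurableSpace.comap (ξ j) inferInstance] g) :
    μ[g | Filtration.natural ξ hξ i] =ᵐ[μ] fun _ => μ[g] :=
  have := hindep.isProbabilityMeasure
  condExp_indep_eq (hξ j).measurable.comap_le (Filtration.le _ _) hg
    (hindep.indep_comap_natural_of_lt hξ hij)

theorem exists_lt_le_eq_of_sub_one_le_succ {s : ℕ → ℤ} (hs : ∀ k, s k - 1 ≤ s (k + 1))
    {a b : ℕ} (hab : a ≤ b) {c : ℤ} (ha : c < s a) (hb : s b ≤ c) :
    ∃ k, a < k ∧ k ≤ b ∧ s k = c := by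
  induction b, hab using Nat.le_induction with
  | base => exact absurd ha hb.not_gt
  | succ b hab ih =>
    by_cases hsb : s b ≤ c
    · obtain ⟨k, hak, hkb, hk⟩ := ih hsb
      exact ⟨k, hak, hkb.trans b.le_succ, hk⟩
    · exact ⟨b + 1, by omega, le_rfl, by linarith [hs b]⟩

theorem exists_pos_eq_of_not_bddAbove_of_not_bddBelow {s : ℕ → ℤ}
    (hs : ∀ k, s k - 1 ≤ s (k + 1)) (hup : ¬BddAbove (range s)) (hdown : ¬BddBelow (range s))
    (c : ℤ) : ∃ n, 0 < n ∧ s n = c := by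
  obtain ⟨_, ⟨a, rfl⟩, ha⟩ := not_bddAbove_iff.1 hup c
  obtain ⟨C, hC⟩ := ((finite_Iic a).image s).bddBelow
  obtain ⟨_, ⟨b, rfl⟩, hb⟩ := not_bddBelow_iff.1 hdown (min C c)
  have hab : a ≤ b := by
    by_contra! hba
    exact (hb.trans_le (min_le_left _ _)).not_ge (hC ⟨b, hba.le, rfl⟩)
  obtain ⟨k, hak, -, hk⟩ :=
    exists_lt_le_eq_of_sub_one_le_succ hs hab ha (hb.le.trans (min_le_right _ _))
  exact ⟨k, by omega, hk⟩

theorem bddAbove_range_of_abs_sub_intCast_le {ι : Type*} {s : ι → ℤ} {f : ι → ℝ}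
    {K : ℝ} (h : ∀ i, |f i - s i| ≤ K) (hs : BddAbove (range s)) : BddAbove (range f) := by
  obtain ⟨C, hC⟩ := hs
  refine ⟨C + K, forall_mem_range.2 fun i => ?_⟩
  have hsi : (s i : ℝ) ≤ C := by exact_mod_cast hC (mem_range_self i)
  linarith [(abs_le.1 (h i)).2]

theorem bddBelow_range_of_abs_sub_intCast_le {ι : Type*} {s : ι → ℤ} {f : ι → ℝ}
    {K : ℝ} (h : ∀ i, |f i - s i| ≤ K) (hs : BddBelow (range s)) : BddBelow (range f) := by
  obtain ⟨C, hC⟩ := hs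
  refine ⟨C - K, forall_mem_range.2 fun i => ?_⟩
  have hsi : (C : ℝ) ≤ s i := by exact_mod_cast hC (mem_range_self i)
  linarith [(abs_le.1 (h i)).1]

section Ladder

variable (p : ℝ) (ξ : ℕ → Ω → ℤ)

/-- `E[X_{n+1} | ξ_1, …, ξ_n]` when `P(ξ_{n+1} = 1) = p`. -/
def ladderDrift (n : ℕ) (ω : Ω) : ℝ :=
  if n ≠ 0 ∧ ξ n ω = 1 then 3 * p - 1 else 2 * p - 1

def ladderMartingale (n : ℕ) (ω : Ω) : ℝ :=
  ladderS ξ n ω + ladderDrift p ξ n ω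

def ladderCoeff (n : ℕ) (ω : Ω) : ℝ :=
  if n ≠ 0 ∧ ξ n ω = 1 then 3 + p else 2 + p

def ladderNoise (n : ℕ) (ω : Ω) : ℝ :=
  {ω | ξ n ω = 1}.indicator 1 ω - p

variable {p ξ}

omit [MeasurableSpace Ω] in
@[simp]
theorem ladderS_zero (ω : Ω) : ladderS ξ 0 ω = 0 := by
  simp [ladderS]

omit [MeasurableSpace Ω] in
theorem ladderS_succ (n : ℕ) (ω : Ω) :
    ladderS ξ (n + 1) ω = ladderS ξ n ω + ladderX ξ (n + 1) ω :=
  Finset.sum_Icc_succ_top (Nat.le_add_left 1 n) _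

omit [MeasurableSpace Ω] in
theorem ladderS_sub_one_le_succ (n : ℕ) (ω : Ω) :
    ladderS ξ n ω - 1 ≤ ladderS ξ (n + 1) ω := by
  have hX : -1 ≤ ladderX ξ (n + 1) ω := by
    unfold ladderX; split_ifs <;> norm_num
  rw [ladderS_succ]
  omega

omit [MeasurableSpace Ω] in
theorem abs_ladderMartingale_sub_ladderS_le (hp0 : 0 ≤ p) (n : ℕ) (ω : Ω) :
    |ladderMartingale p ξ n ω - ladderS ξ n ω| ≤ 3 * p + 1 := by
  rw [ladderMartingale, add_sub_cancel_left, ladderDrift, abs_le]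
  split_ifs <;> constructor <;> linarith

omit [MeasurableSpace Ω] in
theorem ladderMartingale_zero : ladderMartingale p ξ 0 = fun _ => 2 * p - 1 := by
  ext ω
  simp [ladderMartingale, ladderDrift]

omit [MeasurableSpace Ω] in
theorem ladderMartingale_succ_sub (hp : p ^ 2 + 2 * p = 1)
    (hval : ∀ n ω, ξ n ω = 1 ∨ ξ n ω = -1) (n : ℕ) (ω : Ω) :
    ladderMartingale p ξ (n + 1) ω - ladderMartingale p ξ n ω =
      ladderCoeff p ξ n ω * ladderNoise p ξ (n + 1) ω := by
  simp only [ladderMartingale, ladderS_succ, ladderDrift, ladderCoeff, ladderNoise, ladderX]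
  rcases Nat.eq_zero_or_pos n with rfl | hn
  · rcases hval 1 ω with h | h <;> simp [h] <;> linarith
  · rcases hval (n + 1) ω with h | h <;> rcases hval n ω with h' | h' <;>
      simp [h, h', hn.ne'] <;> linarith

omit [MeasurableSpace Ω] in
theorem abs_ladderMartingale_succ_sub_mem_Icc (hp : p ^ 2 + 2 * p = 1) (hp0 : 0 ≤ p)
    (hval : ∀ n ω, ξ n ω = 1 ∨ ξ n ω = -1) (n : ℕ) (ω : Ω) :
    |ladderMartingale p ξ (n + 1) ω - ladderMartingale p ξ n ω| ∈ Icc 1 2 := by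
  have hp1 : p ≤ 1 / 2 := by nlinarith
  -- the increment is `2` or `-(1 + p)` after `ξ_n = 1`, and `1 + p` or `-1` otherwise
  rw [ladderMartingale_succ_sub hp hval, ladderCoeff, ladderNoise]
  by_cases h : ξ (n + 1) ω = 1 <;> simp only [h, mem_ofPred_eq, not_false_eq_true,
    indicator_of_mem, indicator_of_notMem, Pi.one_apply] <;> split_ifs <;>
    simp only [mem_Icc, le_abs, abs_le] <;>
    exact ⟨by first | (left; nlinarith) | (right; nlinarith), by nlinarith, by nlinarith⟩

omit [MeasurableSpace Ω] in
theorem abs_ladderCoeff_le (hp0 : 0 ≤ p) (n : ℕ) (ω : Ω) :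
    |ladderCoeff p ξ n ω| ≤ 3 + p := by
  unfold ladderCoeff
  split_ifs <;> rw [abs_le] <;> constructor <;> linarith

theorem stronglyAdapted_ladderCoeff (hξ : ∀ n, StronglyMeasurable (ξ n)) :
    StronglyAdapted (Filtration.natural ξ hξ) (ladderCoeff p ξ) := fun n =>
  ((Measurable.of_discrete (f := fun z : ℤ => if n ≠ 0 ∧ z = 1 then 3 + p else 2 + p)).comp
    (Filtration.stronglyAdapted_natural hξ n).measurable).stronglyMeasurable

theorem stronglyAdapted_ladderNoise (hξ : ∀ n, StronglyMeasurable (ξ n)) :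
    StronglyAdapted (Filtration.natural ξ hξ) (ladderNoise p ξ) := fun n =>
  (stronglyMeasurable_one.indicator
    ((Filtration.stronglyAdapted_natural hξ n).measurable (measurableSet_singleton 1))).sub
    stronglyMeasurable_const

theorem integrable_ladderNoise {P : Measure Ω} [IsFiniteMeasure P]
    (hmeas : ∀ n, Measurable (ξ n)) (n : ℕ) : Integrable (ladderNoise p ξ n) P :=
  ((integrable_const 1).indicator (hmeas n (measurableSet_singleton 1))).sub (integrable_const p)

theorem condExp_ladderNoise_ae_eq_zero {P : Measure Ω} [IsProbabilityMeasure P] (hp0 : 0 ≤ p)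
    (hmeas : ∀ n, Measurable (ξ n)) (hindep : iIndepFun ξ P) {n : ℕ}
    (hprob : P {ω | ξ (n + 1) ω = 1} = ENNReal.ofReal p) :
    P[ladderNoise p ξ (n + 1) | Filtration.natural ξ (fun n => (hmeas n).stronglyMeasurable) n]
      =ᵐ[P] 0 := by
  have hs : MeasurableSet[MeasurableSpace.comap (ξ (n + 1)) inferInstance]
      {ω | ξ (n + 1) ω = 1} :=
    comap_measurable _ (measurableSet_singleton 1)
  refine (hindep.condExp_natural_ae_eq_of_lt_of_stronglyMeasurable _ n.lt_succ_self
    ((stronglyMeasurable_one.indicator hs).sub stronglyMeasurable_const)).trans ?_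
  have hsP : MeasurableSet {ω | ξ (n + 1) ω = 1} := hmeas _ (measurableSet_singleton 1)
  have hind : Integrable ({ω | ξ (n + 1) ω = 1}.indicator 1) P :=
    (integrable_const (1 : ℝ)).indicator hsP
  have hmean : ∫ ω, ladderNoise p ξ (n + 1) ω ∂P = 0 := by
    simp only [ladderNoise]
    rw [integral_sub hind (integrable_const p), integral_indicator_one hsP, measureReal_def, hprob,
      ENNReal.toReal_ofReal hp0]
    simp
  exact Filter.EventuallyEq.of_eq (funext fun _ => hmean)

theorem martingale_ladderMartingale (hp : p ^ 2 + 2 * p = 1) (hp0 : 0 ≤ p) {P : Measure Ω}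
    [IsProbabilityMeasure P] (hmeas : ∀ n, Measurable (ξ n)) (hindep : iIndepFun ξ P)
    (hval : ∀ n ω, ξ n ω = 1 ∨ ξ n ω = -1)
    (hprob : ∀ n, 1 ≤ n → P {ω | ξ n ω = 1} = ENNReal.ofReal p) :
    Martingale (ladderMartingale p ξ)
      (Filtration.natural ξ fun n => (hmeas n).stronglyMeasurable) P := by
  refine martingale_of_succ_eq_add_mul (B := ladderCoeff p ξ) (D := ladderNoise p ξ) ?_ ?_
    (stronglyAdapted_ladderCoeff _) (abs_ladderCoeff_le hp0) (stronglyAdapted_ladderNoise _)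
    (integrable_ladderNoise hmeas)
    (fun n => condExp_ladderNoise_ae_eq_zero hp0 hmeas hindep (hprob (n + 1) (Nat.le_add_left 1 n)))
    (fun n => funext fun ω => eq_add_of_sub_eq' (ladderMartingale_succ_sub hp hval n ω))
  · rw [ladderMartingale_zero]; exact stronglyMeasurable_const
  · rw [ladderMartingale_zero]; exact integrable_const _

end Ladder

/-- The ladder chain `L(2,2,√2-1)` is recurrent:
`P(S_n = 0 for some n ≥ 1) = 1`. -/
theorem ladder_critical_recurrent (p : ℝ) (hp : p = Real.sqrt 2 - 1)
    (P : Measure Ω) [IsProbabilityMeasure P]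
    (ξ : ℕ → Ω → ℤ) (hmeas : ∀ n, Measurable (ξ n))
    (hindep : iIndepFun ξ P)
    (hval : ∀ n ω, ξ n ω = 1 ∨ ξ n ω = -1)
    (hprob : ∀ n, 1 ≤ n → P {ω | ξ n ω = 1} = ENNReal.ofReal p) :
    P {ω | ∃ n, 1 ≤ n ∧ ladderS ξ n ω = 0} = 1 := by
  have hp0 : 0 ≤ p := by rw [hp, sub_nonneg]; exact Real.one_le_sqrt.2 one_le_two
  have hp2 : p ^ 2 + 2 * p = 1 := by
    rw [hp]; ring_nf; rw [Real.sq_sqrt zero_le_two]; ring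
  have hinc := abs_ladderMartingale_succ_sub_mem_Icc hp2 hp0 hval
  have hosc := (martingale_ladderMartingale hp2 hp0 hmeas hindep hval hprob)
    |>.ae_not_bddAbove_and_not_bddBelow (R := 2) one_pos
      (ae_of_all _ fun ω n => (hinc n ω).2) (ae_of_all _ fun ω n => (hinc n ω).1)
  have hrec : ∀ᵐ ω ∂P, ∃ n, 1 ≤ n ∧ ladderS ξ n ω = 0 := by
    filter_upwards [hosc] with ω ⟨hup, hdown⟩
    have hclose := fun n => abs_ladderMartingale_sub_ladderS_le (ξ := ξ) hp0 n ω
    exact exists_pos_eq_of_not_bddAbove_of_not_bddBelow (ladderS_sub_one_le_succ · ω)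
      (fun h => hup (bddAbove_range_of_abs_sub_intCast_le hclose h))
      (fun h => hdown (bddBelow_range_of_abs_sub_intCast_le hclose h)) 0
  exact (measure_congr (ae_eq_univ.2 (ae_iff.1 hrec))).trans measure_univ

end
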